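/- Let n be a positive integer not divisible by 3, let Π be a (3,n)-Dyck path, let k be the number of cells of λ(Π) in the first column of the lattice and ℓ the number of cells of λ(Π) in the second column. If k > n/3 and k − ℓ > n/3 + 1, then skips(Π) = k − ℓ − ⌈n/3⌉ and dinv(Π) = 2ℓ + ⌈n/3⌉. -/

import Mathlib

open MvPolynomial

/-- An `(m,n)`-Dyck path: a north/east lattice path from `(0,0)` to `(m,n)` staying
weakly above the diagonal `y = (n/m)x`.  Such a path is encoded by recording, for each
of the `m` columns (indexed `0,…,m-1` from left to right), the number of cells of that
column lying above the path; this gives an antitone sequence, and the diagonal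
condition for the east step in column `i` reads `m * c i ≤ n * (m - 1 - i)`. -/
def DyckPath (m n : ℕ) : Type :=
  {c : Fin m → Fin (n + 1) //
    (∀ i j : Fin m, i ≤ j → (c j : ℕ) ≤ (c i : ℕ)) ∧
      ∀ i : Fin m, m * (c i : ℕ) ≤ n * (m - 1 - (i : ℕ))}

noncomputable instance instFintypeDyckPath (m n : ℕ) : Fintype (DyckPath m n) := by
  classical
  unfold DyckPath
  infer_instance

namespace DyckPath

variable {m n : ℕ}

/-- `λ(Π)`, the set of cells of the `m × n` lattice lying above the path `Π`.
The cell `(i, j)` (with `i : Fin m`, `j : Fin n`) is the cell in column `i + 1`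
(from the left) and row `j + 1` (from the bottom) in the paper's 1-based indexing. -/
def cellsAbove (P : DyckPath m n) : Set (Fin m × Fin n) :=
  {x | n - (P.1 x.1 : ℕ) ≤ (x.2 : ℕ)}

/-- `arm(x)`: the number of cells of `λ(Π)` strictly east of `x` (in the row of `x`). -/
noncomputable def arm (P : DyckPath m n) (x : Fin m × Fin n) : ℕ :=
  {y ∈ P.cellsAbove | x.1 < y.1 ∧ y.2 = x.2}.ncard

/-- `leg(x)`: the number of cells of `λ(Π)` strictly south of `x` (in the column of `x`). -/
noncomputable def leg (P : DyckPath m n) (x : Fin m × Fin n) : ℕ :=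
  {y ∈ P.cellsAbove | y.1 = x.1 ∧ y.2 < x.2}.ncard

end DyckPath

/-- The dinv condition `arm/(leg+1) < m/n < (arm+1)/leg` for a cell with given arm `a`
and leg `l`, the right inequality being interpreted as true when `l = 0`. -/
def dinvCond (m n a l : ℕ) : Prop :=
  (a : ℚ) / ((l : ℚ) + 1) < (m : ℚ) / (n : ℚ) ∧
    (l = 0 ∨ (m : ℚ) / (n : ℚ) < ((a : ℚ) + 1) / (l : ℚ))

namespace DyckPath

variable {m n : ℕ}

/-- `dinv(Π)`: the number of cells `x ∈ λ(Π)` with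
`arm(x)/(leg(x)+1) < m/n < (arm(x)+1)/leg(x)`. -/
noncomputable def dinv (P : DyckPath m n) : ℕ :=
  {x ∈ P.cellsAbove | dinvCond m n (P.arm x) (P.leg x)}.ncard

/-- `area(Π)`: the number of cells of the lattice lying entirely between the path and
the diagonal, i.e. cells lying entirely weakly above the diagonal `y = (n/m)x` and
below the path. -/
noncomputable def area (P : DyckPath m n) : ℕ :=
  {x : Fin m × Fin n | n * ((x.1 : ℕ) + 1) ≤ m * (x.2 : ℕ) ∧ x ∉ P.cellsAbove}.ncard

end DyckPath

/-- The `(m,n)`-rational `q,t`-Catalan polynomial `C_{m,n}(q,t)`, with `q = X 0` and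
`t = X 1`:  `C_{m,n}(q,t) = Σ_Π q^{dinv(Π)} t^{area(Π)}` over all `(m,n)`-Dyck paths. -/
noncomputable def ratCatalan (m n : ℕ) : MvPolynomial (Fin 2) ℤ :=
  ∑ P : DyckPath m n, X 0 ^ P.dinv * X 1 ^ P.area

/-- The rank of the cell `(i, j)` of the `3 × n` lattice: in the paper's 1-based
coordinates `(a, b) = (i+1, j+1)`, this is `R(a,b) = -a·n + 3(b-1)`. -/
def cellRank (n : ℕ) (x : Fin 3 × Fin n) : ℤ :=
  3 * (x.2 : ℤ) - ((x.1 : ℤ) + 1) * (n : ℤ)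

/-- The set of positive ranks of the `3 × n` lattice: these, in increasing order, are
the entries of the rank word. -/
def posRank (n : ℕ) : Set ℤ :=
  {r | 0 < r ∧ ∃ x : Fin 3 × Fin n, cellRank n x = r}

/-- The set of marked ranks of a `(3,n)`-Dyck path: the ranks of the cells above
the path. -/
def markedRank {n : ℕ} (P : DyckPath 3 n) : Set ℤ :=
  cellRank n '' P.cellsAbove

/-- `skips(Π)`: the number of skips of `Π`, i.e. of maximal blocks of consecutive
unmarked entries of the rank word of `Π` having at least one marked entry to the left
and at least one marked entry to the right.  Each such block is counted through its
rightmost entry `r`: `r` is an unmarked entry, some marked entry lies to its left, and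
the next entry of the rank word after `r` is marked. -/
noncomputable def DyckPath.skips {n : ℕ} (P : DyckPath 3 n) : ℕ :=
  {r : ℤ | r ∈ posRank n ∧ r ∉ markedRank P ∧
    (∃ l ∈ markedRank P, l < r) ∧
    ∃ s ∈ markedRank P, r < s ∧ ∀ t ∈ posRank n, r < t → s ≤ t}.ncard

/-!
The third column of a `(3,n)`-Dyck path is empty, so every cell of the second column has arm `0`
and a cell of the first column has arm `1` exactly when its row meets the second column; legs are
read off from the column heights. Hence all `ℓ` cells of the second column are dinv cells, and in
the first column so are the `ℓ` cells of arm `1` and, among those of arm `0`, exactly the lowest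
`⌈n/3⌉`.

First-column ranks `3b - n` and second-column ranks `3b - 2n` lie in different residue classes
mod `3` because `3 ∤ n`, and they alternate. Since `k - ℓ > n/3`, the lowest marked entry
`2n - 3k` is a first-column rank, and all first-column ranks above it are marked. So the skips are
single unmarked second-column ranks, namely those strictly between `2n - 3k` and `n - 3ℓ`.
-/

lemma ncard_setOf_fst_eq_and_val_mem {m n : ℕ} (i : Fin m) {s : Set ℕ} (hs : s ⊆ Set.Iio n) :
    {x : Fin m × Fin n | x.1 = i ∧ (x.2 : ℕ) ∈ s}.ncard = s.ncard := by
  refine Set.ncard_congr (fun x _ => (x.2 : ℕ)) ?_ ?_ ?_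
  · rintro x ⟨-, hx⟩
    exact hx
  · rintro x y ⟨hx, -⟩ ⟨hy, -⟩ h
    exact Prod.ext (hx.trans hy.symm) (Fin.ext h)
  · intro j hj
    exact ⟨(i, ⟨j, hs hj⟩), ⟨rfl, hj⟩, rfl⟩

lemma dinvCond_iff {m n a l : ℕ} (hn : 0 < n) :
    dinvCond m n a l ↔ a * n < m * (l + 1) ∧ (l = 0 ∨ m * l < (a + 1) * n) := by
  have hn' : (0 : ℚ) < n := by exact_mod_cast hn
  unfold dinvCond
  rw [div_lt_div_iff₀ (by positivity) hn']
  refine and_congr (by norm_cast) (or_congr_right' fun hl => ?_)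
  rw [div_lt_div_iff₀ hn' (by positivity)]
  norm_cast

namespace DyckPath

section

variable {m n : ℕ} (P : DyckPath m n)

lemma val_le (i : Fin m) : (P.1 i : ℕ) ≤ n := Nat.lt_succ_iff.mp (P.1 i).isLt

lemma mem_cellsAbove {x : Fin m × Fin n} : x ∈ P.cellsAbove ↔ n - P.1 x.1 ≤ x.2 := Iff.rfl

lemma ncard_cellsAbove_fst_eq (i : Fin m) : {x ∈ P.cellsAbove | x.1 = i}.ncard = P.1 i := by
  have hcol : {x ∈ P.cellsAbove | x.1 = i} =
      {x : Fin m × Fin n | x.1 = i ∧ (x.2 : ℕ) ∈ Set.Ico (n - P.1 i) n} := by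
    ext ⟨a, b⟩
    simp only [Set.mem_ofPred_eq, mem_cellsAbove, Set.mem_Ico]
    constructor
    · rintro ⟨h, rfl⟩
      exact ⟨rfl, h, b.isLt⟩
    · rintro ⟨rfl, h, -⟩
      exact ⟨h, rfl⟩
  rw [hcol, ncard_setOf_fst_eq_and_val_mem i Set.Ico_subset_Iio_self, Set.ncard_Ico_nat]
  have := P.val_le i
  omega

lemma leg_mk (i : Fin m) (j : Fin n) : P.leg (i, j) = j - (n - P.1 i) := by
  have hcol : {y ∈ P.cellsAbove | y.1 = i ∧ y.2 < j} =
      {y : Fin m × Fin n | y.1 = i ∧ (y.2 : ℕ) ∈ Set.Ico (n - P.1 i) j} := by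
    ext ⟨a, b⟩
    simp only [Set.mem_ofPred_eq, mem_cellsAbove, Set.mem_Ico, Fin.lt_def]
    constructor
    · rintro ⟨h₁, rfl, h₂⟩
      exact ⟨rfl, h₁, h₂⟩
    · rintro ⟨rfl, h₁, h₂⟩
      exact ⟨h₁, rfl, h₂⟩
  rw [leg, hcol, ncard_setOf_fst_eq_and_val_mem i
    (Set.Ico_subset_Iio_self.trans (Set.Iio_subset_Iio j.isLt.le)), Set.ncard_Ico_nat]

lemma arm_mk (i : Fin m) (j : Fin n) :
    P.arm (i, j) = (Finset.univ.filter fun i' => i < i' ∧ n - P.1 i' ≤ j).card := by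
  rw [arm, ← Set.ncard_coe_finset]
  refine Set.ncard_congr (fun y _ => y.1) ?_ ?_ ?_
  · rintro ⟨a, b⟩ ⟨hy, hlt, rfl⟩
    exact Finset.mem_filter.2 ⟨Finset.mem_univ _, hlt, hy⟩
  · rintro ⟨a, b⟩ ⟨a', b'⟩ ⟨-, -, hb⟩ ⟨-, -, hb'⟩ (rfl : a = a')
    simp_all
  · intro a ha
    simp only [Finset.coe_filter, Finset.mem_univ, true_and, Set.mem_ofPred_eq] at ha
    exact ⟨(a, j), ⟨ha.2, ha.1, rfl⟩, rfl⟩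

end

section

variable {n : ℕ} (P : DyckPath 3 n)

lemma val_two_eq_zero : (P.1 2 : ℕ) = 0 := by simpa using P.2.2 2

lemma three_mul_val_one_le : 3 * (P.1 1 : ℕ) ≤ n := by simpa using P.2.2 1

lemma three_mul_val_zero_le : 3 * (P.1 0 : ℕ) ≤ 2 * n := by simpa [mul_comm n] using P.2.2 0

lemma val_one_le_val_zero : (P.1 1 : ℕ) ≤ P.1 0 := P.2.1 0 1 (by decide)

lemma arm_zero_mk (j : Fin n) : P.arm (0, j) = if n - P.1 1 ≤ j then 1 else 0 := by
  rw [arm_mk, Finset.card_filter, Fin.sum_univ_three]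
  have h2 : ¬ n - (P.1 2 : ℕ) ≤ j := by
    have := j.isLt
    rw [P.val_two_eq_zero]
    omega
  simp [h2]

lemma arm_one_mk (j : Fin n) : P.arm (1, j) = 0 := by
  rw [arm_mk, Finset.card_filter, Fin.sum_univ_three]
  have h2 : ¬ n - (P.1 2 : ℕ) ≤ j := by
    have := j.isLt
    rw [P.val_two_eq_zero]
    omega
  simp [h2]

lemma dinv_eq (hn : 0 < n) (hgap : (n + 2) / 3 ≤ P.1 0 - P.1 1) :
    P.dinv = 2 * P.1 1 + (n + 2) / 3 := by
  set k : ℕ := (P.1 0 : ℕ)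
  set ℓ : ℕ := (P.1 1 : ℕ)
  have := P.three_mul_val_zero_le
  have := P.three_mul_val_one_le
  have := P.val_one_le_val_zero
  have := P.val_two_eq_zero
  have hcells : {x ∈ P.cellsAbove | dinvCond 3 n (P.arm x) (P.leg x)} =
      {x | x.1 = 0 ∧ (x.2 : ℕ) ∈ Set.Ico (n - k) (n - k + (n + 2) / 3) ∪ Set.Ico (n - ℓ) n} ∪
        {x | x.1 = 1 ∧ (x.2 : ℕ) ∈ Set.Ico (n - ℓ) n} := by
    ext ⟨a, b⟩
    have := b.isLt
    fin_cases a <;>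
      simp [mem_cellsAbove, arm_zero_mk, arm_one_mk, leg_mk, dinvCond_iff hn] <;>
      (try split_ifs) <;> omega
  have hcols : Disjoint {x : Fin 3 × Fin n | x.1 = 0 ∧ (x.2 : ℕ) ∈
      Set.Ico (n - k) (n - k + (n + 2) / 3) ∪ Set.Ico (n - ℓ) n}
      {x | x.1 = 1 ∧ (x.2 : ℕ) ∈ Set.Ico (n - ℓ) n} :=
    Set.disjoint_left.2 fun x h₀ h₁ => absurd (h₀.1.symm.trans h₁.1) (by decide)
  have hsub : Set.Ico (n - k) (n - k + (n + 2) / 3) ∪ Set.Ico (n - ℓ) n ⊆ Set.Iio n :=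
    Set.union_subset (Set.Ico_subset_Iio_self.trans (Set.Iio_subset_Iio (by omega)))
      Set.Ico_subset_Iio_self
  rw [dinv, hcells, Set.ncard_union_eq hcols, ncard_setOf_fst_eq_and_val_mem 0 hsub,
    ncard_setOf_fst_eq_and_val_mem 1 Set.Ico_subset_Iio_self,
    Set.ncard_union_eq (Set.Ico_disjoint_Ico.2 (by omega))]
  simp only [Set.ncard_Ico_nat]
  omega

end

end DyckPath

lemma mem_posRank_iff {n : ℕ} {z : ℤ} :
    z ∈ posRank n ↔ 0 < z ∧ ∃ b : ℕ, b < n ∧ (z = 3 * b - n ∨ z = 3 * b - 2 * n) := by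
  constructor
  · rintro ⟨hz, ⟨a, b⟩, rfl⟩
    have := b.isLt
    refine ⟨hz, b, b.isLt, ?_⟩
    fin_cases a <;> simp [cellRank] at hz ⊢
    omega
  · rintro ⟨hz, b, hb, rfl | rfl⟩
    · exact ⟨hz, (0, ⟨b, hb⟩), by simp [cellRank]⟩
    · exact ⟨hz, (1, ⟨b, hb⟩), by simp [cellRank]⟩

namespace DyckPath

variable {n : ℕ} (P : DyckPath 3 n)

lemma mem_markedRank_iff {z : ℤ} :
    z ∈ markedRank P ↔ ∃ b : ℕ, b < n ∧
      (n - (P.1 0 : ℕ) ≤ b ∧ z = 3 * b - n ∨ n - (P.1 1 : ℕ) ≤ b ∧ z = 3 * b - 2 * n) := by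
  constructor
  · rintro ⟨⟨a, b⟩, hx, rfl⟩
    have := b.isLt
    have := P.val_two_eq_zero
    refine ⟨b, b.isLt, ?_⟩
    fin_cases a <;> simp [cellRank, mem_cellsAbove] at hx ⊢ <;> omega
  · rintro ⟨b, hb, ⟨h, rfl⟩ | ⟨h, rfl⟩⟩
    · exact ⟨(0, ⟨b, hb⟩), h, by simp [cellRank]⟩
    · exact ⟨(1, ⟨b, hb⟩), h, by simp [cellRank]⟩

def IsSkipEnd (r : ℤ) : Prop :=
  r ∈ posRank n ∧ r ∉ markedRank P ∧ (∃ l ∈ markedRank P, l < r) ∧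
    ∃ s ∈ markedRank P, r < s ∧ ∀ t ∈ posRank n, r < t → s ≤ t

lemma isSkipEnd_iff (h3 : ¬ 3 ∣ n) (hgap : n < 3 * ((P.1 0 : ℕ) - P.1 1)) {r : ℤ} :
    P.IsSkipEnd r ↔ r ∈ (fun j : ℤ => 3 * j - 2 * n) ''
      Set.Ioo ((n : ℤ) + n / 3 - (P.1 0 : ℕ)) ((n : ℤ) - (P.1 1 : ℕ)) := by
  have := P.three_mul_val_zero_le
  have := P.three_mul_val_one_le
  have := P.val_one_le_val_zero
  constructor
  · rintro ⟨hpos, hunmarked, ⟨l, hl, hlr⟩, -⟩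
    obtain ⟨b', -, hl'⟩ := P.mem_markedRank_iff.1 hl
    obtain ⟨-, b, hb, rfl | rfl⟩ := mem_posRank_iff.1 hpos
    · have : b < n - (P.1 0 : ℕ) := not_le.1 fun h =>
        hunmarked (P.mem_markedRank_iff.2 ⟨b, hb, .inl ⟨h, rfl⟩⟩)
      omega
    · have : b < n - (P.1 1 : ℕ) := not_le.1 fun h =>
        hunmarked (P.mem_markedRank_iff.2 ⟨b, hb, .inr ⟨h, rfl⟩⟩)
      exact ⟨b, ⟨by omega, by omega⟩, rfl⟩
  · rintro ⟨j, ⟨hj₀, hj₁⟩, rfl⟩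
    dsimp only
    -- the entry of the rank word right after `3j - 2n` is the first-column rank `3(j - n/3) - n`
    refine ⟨mem_posRank_iff.2 ⟨by omega, j.toNat, by omega, .inr (by omega)⟩, fun h => ?_,
      ⟨3 * (n - (P.1 0 : ℕ) : ℕ) - n,
        P.mem_markedRank_iff.2 ⟨n - (P.1 0 : ℕ), by omega, .inl ⟨le_rfl, rfl⟩⟩, by omega⟩,
      3 * (j - n / 3) - n,
      P.mem_markedRank_iff.2 ⟨(j - n / 3).toNat, by omega, .inl ⟨by omega, by omega⟩⟩,
      by omega, fun t ht hjt => ?_⟩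
    · obtain ⟨b, -, hb⟩ := P.mem_markedRank_iff.1 h
      omega
    · obtain ⟨-, b, -, hb⟩ := mem_posRank_iff.1 ht
      omega

lemma skips_eq (h3 : ¬ 3 ∣ n) (hgap : n < 3 * ((P.1 0 : ℕ) - P.1 1)) :
    P.skips = (P.1 0 : ℕ) - P.1 1 - (n + 2) / 3 := by
  have hskips : {r | P.IsSkipEnd r} = (fun j : ℤ => 3 * j - 2 * n) ''
      Set.Ioo ((n : ℤ) + n / 3 - (P.1 0 : ℕ)) ((n : ℤ) - (P.1 1 : ℕ)) :=
    Set.ext fun _ => P.isSkipEnd_iff h3 hgap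
  have hinj : Function.Injective fun j : ℤ => 3 * j - 2 * n := fun a b h => by
    simp only at h
    omega
  rw [show P.skips = {r | P.IsSkipEnd r}.ncard from rfl, hskips,
    Set.ncard_image_of_injective _ hinj, ← Finset.coe_Ioo, Set.ncard_coe_finset, Int.card_Ioo]
  omega

end DyckPath

lemma ceil_natCast_div_three (n : ℕ) : ⌈(n : ℚ) / 3⌉ = ((n + 2) / 3 : ℕ) := by
  have h := Rat.ceil_natCast_div_natCast n 3
  push_cast at h
  omega

theorem skips_dinv_of_large_first_column_case_two_general (n : ℕ) (h3 : ¬ (3 ∣ n))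
    (P : DyckPath 3 n) (k ℓ : ℕ)
    (hk : k = {x ∈ P.cellsAbove | x.1 = 0}.ncard)
    (hl : ℓ = {x ∈ P.cellsAbove | x.1 = 1}.ncard)
    (hkl : (n : ℚ) / 3 + 1 < (k : ℚ) - (ℓ : ℚ)) :
    (P.skips : ℤ) = (k : ℤ) - (ℓ : ℤ) - ⌈(n : ℚ) / 3⌉ ∧
      (P.dinv : ℤ) = 2 * (ℓ : ℤ) + ⌈(n : ℚ) / 3⌉ := by
  rw [P.ncard_cellsAbove_fst_eq] at hk hl
  subst hk hl
  have hgap : n + 3 + 3 * (P.1 1 : ℕ) < 3 * (P.1 0 : ℕ) := by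
    have : (n : ℚ) + 3 + 3 * (P.1 1 : ℕ) < 3 * (P.1 0 : ℕ) := by linarith
    exact_mod_cast this
  have hn : 0 < n := Nat.pos_of_ne_zero fun h => h3 (h ▸ dvd_zero 3)
  rw [ceil_natCast_div_three, P.skips_eq h3 (by omega), P.dinv_eq hn (by omega)]
  omega

/-- If `k > n/3` and `k − ℓ > n/3 + 1`, where `k` and `ℓ` are the
numbers of cells of `λ(Π)` in the first and second columns, then
`skips(Π) = k − ℓ − ⌈n/3⌉` and `dinv(Π) = 2ℓ + ⌈n/3⌉`. -/
theorem skips_dinv_of_large_first_column_case_two (n : ℕ) (hn : 0 < n) (h3 : ¬ (3 ∣ n))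
    (P : DyckPath 3 n) (k ℓ : ℕ)
    (hk : k = {x ∈ P.cellsAbove | x.1 = 0}.ncard)
    (hl : ℓ = {x ∈ P.cellsAbove | x.1 = 1}.ncard)
    (hkn : (n : ℚ) / 3 < (k : ℚ)) (hkl : (n : ℚ) / 3 + 1 < (k : ℚ) - (ℓ : ℚ)) :
    (P.skips : ℤ) = (k : ℤ) - (ℓ : ℤ) - ⌈(n : ℚ) / 3⌉ ∧
      (P.dinv : ℤ) = 2 * (ℓ : ℤ) + ⌈(n : ℚ) / 3⌉ :=
  skips_dinv_of_large_first_column_case_two_general n h3 P k ℓ hk hl hkl
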